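/- Let 0 < p, q < 1 with p + q > 1/2, and suppose 1 − m^{-q} ≤ a_{m,t} ≤ 1 for all m and all 1 ≤ t ≤ m. Let s_m(ζ) = Σ_{t=1}^m ζ_t, and let E0 s_m = m/2 and E1 s_m denote its expectations under P0_m and P1_m respectively. Then for any sequence of critical values c'_m satisfying E1 s_m ≤ c'_m ≤ E0 s_m, the power of the sum test is bounded away from 1: limsup_{m→∞} P1_m(s_m ≤ c'_m) < 1. (Proposition 3.3, part 2.) -/

import Mathlib

open MeasureTheory Filter

/-- The uniform distribution on `[0, a]` (for `a > 0`). -/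
noncomputable def unif (a : ℝ) : Measure ℝ :=
  (ENNReal.ofReal a)⁻¹ • volume.restrict (Set.Icc 0 a)

/-- The mixture `(1 - ε)·U[0,1] + ε·U[0,a]`. -/
noncomputable def mix (ε a : ℝ) : Measure ℝ :=
  ENNReal.ofReal (1 - ε) • unif 1 + ENNReal.ofReal ε • unif a

/-- The null law `P0_m`: `m` i.i.d. uniform-`[0,1]` coordinates. -/
noncomputable def nullLaw (m : ℕ) : Measure (Fin m → ℝ) :=
  Measure.pi fun _ => unif 1

/-- The alternative law `P1_m`: independent coordinates, the `t`-th distributed as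
`(1 - ε)·U[0,1] + ε·U[0, a t]`. -/
noncomputable def altLaw (m : ℕ) (ε : ℝ) (a : Fin m → ℝ) : Measure (Fin m → ℝ) :=
  Measure.pi fun t => mix ε (a t)

/-!
Centre the coordinates, `Y t = ζ t - E₁ ζ t`, and let `X = ∑ t, Y t = s_m - E₁ s_m`. The `Y t` are
independent, bounded by `1` and have variance at least `(1 - ε)/12`, so `E X² ≍ m` and, expanding
`(X + Y)⁴` along the independent summands, `E X⁴ ≤ 3 m² ≤ K (E X²)²`. A centred variable with such
a fourth moment is not concentrated on one side of its mean at scale `√(E X²)`: `E X² ≤ 8 K (E|X|)²`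
by splitting `x² ≤ l|x| + x⁴/l²`, and Cauchy–Schwarz applied to `E[|X| 1{X > t}] ≥ E|X|/2 - t` gives
`P(X > t) ≥ 1/(128 K)` as long as `t² ≲ E X²/K`. The threshold `c'_m - E₁ s_m` is at most
`E₀ s_m - E₁ s_m ≤ m ε_m m^{-q}/2`, which is `o(√m)` exactly because `p + q > 1/2`; hence
`P₁(s_m > c'_m)` stays bounded below.
-/

open ProbabilityTheory Finset Topology

section IndependentSums

variable {Ω : Type*} [MeasurableSpace Ω] {μ : Measure Ω}

lemma ProbabilityTheory.IndepFun.integral_add_pow [IsFiniteMeasure μ] {X Y : Ω → ℝ}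
    (hXY : IndepFun X Y μ) (hX : Measurable X) (hY : Measurable Y) {a b : ℝ}
    (hXa : ∀ᵐ ω ∂μ, |X ω| ≤ a) (hYb : ∀ᵐ ω ∂μ, |Y ω| ≤ b) (n : ℕ) :
    ∫ ω, (X ω + Y ω) ^ n ∂μ =
      ∑ k ∈ range (n + 1), (∫ ω, X ω ^ k ∂μ) * (∫ ω, Y ω ^ (n - k) ∂μ) * n.choose k := by
  have hint (k j : ℕ) : Integrable (fun ω ↦ X ω ^ k * Y ω ^ j) μ := by
    refine .of_bound (by fun_prop) (a ^ k * b ^ j) ?_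
    filter_upwards [hXa, hYb] with ω hx hy
    rw [norm_mul, norm_pow, norm_pow, Real.norm_eq_abs, Real.norm_eq_abs]
    exact mul_le_mul (pow_le_pow_left₀ (abs_nonneg _) hx k)
      (pow_le_pow_left₀ (abs_nonneg _) hy j) (by positivity)
      (pow_nonneg ((abs_nonneg _).trans hx) k)
  simp_rw [add_pow]
  rw [integral_finsetSum _ fun k _ ↦ (hint k _).mul_const _]
  refine sum_congr rfl fun k _ ↦ ?_
  rw [integral_mul_const]
  congr 1
  exact (hXY.comp (measurable_id.pow_const k) (measurable_id.pow_const (n - k))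
    ).integral_fun_mul_eq_mul_integral (by fun_prop) (by fun_prop)

variable [IsProbabilityMeasure μ] {X : Ω → ℝ}

lemma integral_pow_le_one (hX : ∀ᵐ ω ∂μ, |X ω| ≤ 1) (k : ℕ) : ∫ ω, X ω ^ k ∂μ ≤ 1 := by
  refine (le_abs_self _).trans ?_
  simpa using norm_integral_le_of_norm_le_const (μ := μ) (C := 1) (f := fun ω ↦ X ω ^ k)
    (by filter_upwards [hX] with ω hω; simpa using pow_le_one₀ (abs_nonneg _) hω)

variable {ι : Type*} {Y : ι → Ω → ℝ}

omit [IsProbabilityMeasure μ] in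
lemma ae_abs_sum_le_card (hY : ∀ i, ∀ᵐ ω ∂μ, |Y i ω| ≤ 1) (s : Finset ι) :
    ∀ᵐ ω ∂μ, |∑ i ∈ s, Y i ω| ≤ #s := by
  filter_upwards [(eventually_all_finset s).2 fun i _ ↦ hY i] with ω hω
  calc |∑ i ∈ s, Y i ω| ≤ ∑ i ∈ s, |Y i ω| := abs_sum_le_sum_abs _ _
    _ ≤ ∑ i ∈ s, 1 := sum_le_sum hω
    _ = #s := by simp

omit [IsProbabilityMeasure μ] in
lemma ProbabilityTheory.iIndepFun.indepFun_fun_finsetSum_of_notMem (hind : iIndepFun Y μ)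
    (hmeas : ∀ i, Measurable (Y i)) {s : Finset ι} {a : ι} (ha : a ∉ s) :
    IndepFun (Y a) (fun ω ↦ ∑ i ∈ s, Y i ω) μ := by
  simpa [Finset.sum_fn] using (hind.indepFun_finsetSum_of_notMem hmeas ha).symm

variable (hind : iIndepFun Y μ) (hmeas : ∀ i, Measurable (Y i))
  (hbdd : ∀ i, ∀ᵐ ω ∂μ, |Y i ω| ≤ 1) (hcen : ∀ i, ∫ ω, Y i ω ∂μ = 0)
include hmeas hbdd hcen

lemma integral_sum_eq_zero (s : Finset ι) : ∫ ω, ∑ i ∈ s, Y i ω ∂μ = 0 := by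
  rw [integral_finsetSum _ fun i _ ↦ .of_bound (hmeas i).aestronglyMeasurable 1 (hbdd i)]
  simp [hcen]

include hind

lemma integral_sum_sq (s : Finset ι) :
    ∫ ω, (∑ i ∈ s, Y i ω) ^ 2 ∂μ = ∑ i ∈ s, ∫ ω, Y i ω ^ 2 ∂μ := by
  classical
  induction s using Finset.induction_on with
  | empty => simp
  | insert a s ha ih =>
    simp_rw [sum_insert ha]
    rw [(hind.indepFun_fun_finsetSum_of_notMem hmeas ha).integral_add_pow (hmeas a)
      (by fun_prop) (hbdd a) (ae_abs_sum_le_card hbdd s) 2]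
    simp [sum_range_succ, hcen a, ih, integral_sum_eq_zero hmeas hbdd hcen, add_comm]

lemma integral_sum_pow_four_le (s : Finset ι) :
    ∫ ω, (∑ i ∈ s, Y i ω) ^ 4 ∂μ ≤ 3 * #s ^ 2 := by
  classical
  induction s using Finset.induction_on with
  | empty => simp
  | insert a s ha ih =>
    have hsq : ∫ ω, (∑ i ∈ s, Y i ω) ^ 2 ∂μ ≤ #s := by
      rw [integral_sum_sq hind hmeas hbdd hcen]
      simpa using sum_le_sum fun i (_ : i ∈ s) ↦ integral_pow_le_one (hbdd i) 2
    have hcross : (∫ ω, Y a ω ^ 2 ∂μ) * ∫ ω, (∑ i ∈ s, Y i ω) ^ 2 ∂μ ≤ #s := by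
      simpa using mul_le_mul (integral_pow_le_one (hbdd a) 2) hsq
        (integral_nonneg fun ω ↦ sq_nonneg _) zero_le_one
    simp_rw [sum_insert ha]
    rw [(hind.indepFun_fun_finsetSum_of_notMem hmeas ha).integral_add_pow (hmeas a)
      (by fun_prop) (hbdd a) (ae_abs_sum_le_card hbdd s) 4]
    -- the odd cross terms vanish because both `Y a` and the partial sum are centred
    norm_num [sum_range_succ, hcen a, integral_sum_eq_zero hmeas hbdd hcen,
      card_insert_of_notMem ha, Nat.choose]
    linarith [integral_pow_le_one (hbdd a) 4,
      show (3 : ℝ) * (#s + 1) ^ 2 = 3 * #s ^ 2 + 6 * #s + 3 by ring]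

end IndependentSums

section AntiConcentration

variable {Ω : Type*} [MeasurableSpace Ω] {μ : Measure Ω} [IsProbabilityMeasure μ] {X : Ω → ℝ}
  {C : ℝ}

lemma integrable_pow_of_ae_abs_le (hX : Measurable X) (hb : ∀ᵐ ω ∂μ, |X ω| ≤ C) (k : ℕ) :
    Integrable (fun ω ↦ X ω ^ k) μ := by
  refine .of_bound (by fun_prop) (C ^ k) ?_
  filter_upwards [hb] with ω hω
  simpa using pow_le_pow_left₀ (abs_nonneg _) hω k

lemma sq_le_mul_abs_add_pow_four_div {l : ℝ} (hl : 0 < l) (x : ℝ) :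
    x ^ 2 ≤ l * |x| + x ^ 4 / l ^ 2 := by
  rw [← sq_abs x, ← Even.pow_abs ⟨2, rfl⟩ x]
  rcases le_total |x| l with h | h
  · have : 0 ≤ |x| ^ 4 / l ^ 2 := by positivity
    nlinarith [abs_nonneg x]
  · have : |x| ^ 2 ≤ |x| ^ 4 / l ^ 2 := by
      rw [le_div_iff₀ (by positivity)]
      have := pow_le_pow_left₀ hl.le h 2
      nlinarith [sq_nonneg |x|]
    nlinarith [abs_nonneg x]

lemma integral_sq_le_of_integral_pow_four_le (hX : Measurable X) (hb : ∀ᵐ ω ∂μ, |X ω| ≤ C)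
    {K : ℝ} (hK : 0 < K) (h4 : ∫ ω, X ω ^ 4 ∂μ ≤ K * (∫ ω, X ω ^ 2 ∂μ) ^ 2) :
    ∫ ω, X ω ^ 2 ∂μ ≤ 8 * K * (∫ ω, |X ω| ∂μ) ^ 2 := by
  set A2 := ∫ ω, X ω ^ 2 ∂μ
  set A1 := ∫ ω, |X ω| ∂μ
  rcases (integral_nonneg fun ω ↦ sq_nonneg (X ω) : 0 ≤ A2).eq_or_lt with h0 | hA2
  · rw [show A2 = 0 from h0.symm]; positivity
  -- `l ^ 2 = 2 K A2` makes the fourth-moment term below at most `A2 / 2`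
  set l := √(2 * K * A2)
  have hl : 0 < l := Real.sqrt_pos.2 (by positivity)
  have hl2 : l ^ 2 = 2 * K * A2 := Real.sq_sqrt (by positivity)
  have hint := integrable_pow_of_ae_abs_le hX hb
  have hint1 : Integrable X μ := by simpa using hint 1
  have hsplit : A2 ≤ l * A1 + (∫ ω, X ω ^ 4 ∂μ) / l ^ 2 := by
    calc A2 ≤ ∫ ω, (l * |X ω| + X ω ^ 4 / l ^ 2) ∂μ :=
          integral_mono (hint 2) ((hint1.abs.const_mul l).add ((hint 4).div_const _))
            fun ω ↦ sq_le_mul_abs_add_pow_four_div hl (X ω)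
      _ = l * A1 + (∫ ω, X ω ^ 4 ∂μ) / l ^ 2 := by
          rw [integral_add (hint1.abs.const_mul l) ((hint 4).div_const _), integral_const_mul,
            integral_div]
  have h4' : (∫ ω, X ω ^ 4 ∂μ) / l ^ 2 ≤ A2 / 2 := by
    rw [hl2, div_le_iff₀ (by positivity)]
    linarith
  have hsq := pow_le_pow_left₀ hA2.le (by linarith : A2 ≤ 2 * l * A1) 2
  rw [mul_pow, mul_pow, hl2] at hsq
  exact le_of_mul_le_mul_left (by linarith) hA2

lemma sq_sub_le_integral_sq_mul_measureReal_lt (hX : Measurable X) (hb : ∀ᵐ ω ∂μ, |X ω| ≤ C)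
    (hmean : ∫ ω, X ω ∂μ = 0) {t : ℝ} (ht : 0 ≤ t) (htX : t ≤ (∫ ω, |X ω| ∂μ) / 2) :
    ((∫ ω, |X ω| ∂μ) / 2 - t) ^ 2 ≤ (∫ ω, X ω ^ 2 ∂μ) * μ.real {ω | t < X ω} := by
  set A := {ω | t < X ω}
  have hA : MeasurableSet A := measurableSet_lt measurable_const hX
  have hint1 : Integrable X μ := .of_bound hX.aestronglyMeasurable C (by simpa using hb)
  have hpos (ω : Ω) : 0 ≤ A.indicator (1 : Ω → ℝ) ω :=
    Set.indicator_nonneg (fun _ _ ↦ zero_le_one) ω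
  have hpointwise (ω : Ω) : (|X ω| + X ω) / 2 - t ≤ |X ω| * A.indicator (1 : Ω → ℝ) ω := by
    by_cases h : ω ∈ A
    · simp only [Set.indicator_of_mem h, Pi.one_apply, mul_one]
      have : t < X ω := h
      rw [abs_of_pos (ht.trans_lt this)]
      linarith
    · simp only [Set.indicator_of_notMem h, mul_zero]
      have : X ω ≤ t := not_lt.1 h
      rcases le_total 0 (X ω) with h0 | h0
      · rw [abs_of_nonneg h0]; linarith
      · rw [abs_of_nonpos h0]; linarith
  have hlower : (∫ ω, |X ω| ∂μ) / 2 - t ≤ ∫ ω, |X ω| * A.indicator (1 : Ω → ℝ) ω ∂μ := by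
    have hint2 : Integrable (fun ω ↦ |X ω| * A.indicator (1 : Ω → ℝ) ω) μ :=
      hint1.abs.mul_of_top_left (memLp_indicator_const _ hA 1 (Or.inr (measure_ne_top _ _)))
    have hint3 : Integrable (fun ω ↦ (|X ω| + X ω) / 2) μ := (hint1.abs.add hint1).div_const 2
    calc (∫ ω, |X ω| ∂μ) / 2 - t = ∫ ω, ((|X ω| + X ω) / 2 - t) ∂μ := by
          rw [integral_sub hint3 (integrable_const t), integral_div,
            integral_add hint1.abs hint1, hmean]
          simp
      _ ≤ _ := integral_mono (hint3.sub (integrable_const t)) hint2 hpointwise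
  have hind2 (ω : Ω) : A.indicator (1 : Ω → ℝ) ω ^ (2 : ℝ) = A.indicator 1 ω := by
    by_cases h : ω ∈ A <;> simp [h]
  have hCS := integral_mul_le_Lp_mul_Lq_of_nonneg (μ := μ) (g := A.indicator (1 : Ω → ℝ))
    Real.HolderConjugate.two_two (Eventually.of_forall fun ω ↦ abs_nonneg (X ω))
    (Eventually.of_forall hpos) (.of_bound hX.abs.aestronglyMeasurable C (by simpa using hb))
    (memLp_indicator_const _ hA 1 (Or.inr (measure_ne_top _ _)))
  simp only [hind2, Real.rpow_two, sq_abs, integral_indicator_one hA] at hCS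
  calc ((∫ ω, |X ω| ∂μ) / 2 - t) ^ 2
      ≤ (∫ ω, |X ω| * A.indicator (1 : Ω → ℝ) ω ∂μ) ^ 2 :=
        pow_le_pow_left₀ (by linarith) hlower 2
    _ ≤ ((∫ ω, X ω ^ 2 ∂μ) ^ (1 / 2 : ℝ) * μ.real A ^ (1 / 2 : ℝ)) ^ 2 :=
        pow_le_pow_left₀ (by linarith) hCS 2
    _ = (∫ ω, X ω ^ 2 ∂μ) * μ.real A := by
        rw [← Real.sqrt_eq_rpow, ← Real.sqrt_eq_rpow, mul_pow, Real.sq_sqrt (integral_nonneg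
          fun ω ↦ sq_nonneg _), Real.sq_sqrt measureReal_nonneg]

lemma one_div_le_measureReal_lt_of_integral_pow_four_le (hX : Measurable X)
    (hb : ∀ᵐ ω ∂μ, |X ω| ≤ C) (hmean : ∫ ω, X ω ∂μ = 0) {K : ℝ} (hK : 0 < K)
    (h4 : ∫ ω, X ω ^ 4 ∂μ ≤ K * (∫ ω, X ω ^ 2 ∂μ) ^ 2) (h2 : 0 < ∫ ω, X ω ^ 2 ∂μ) {t : ℝ}
    (ht : 0 ≤ t) (htK : 128 * K * t ^ 2 ≤ ∫ ω, X ω ^ 2 ∂μ) :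
    1 / (128 * K) ≤ μ.real {ω | t < X ω} := by
  set A1 := ∫ ω, |X ω| ∂μ
  have hA1 : 0 ≤ A1 := integral_nonneg fun ω ↦ abs_nonneg _
  have hA2 := integral_sq_le_of_integral_pow_four_le hX hb hK h4
  have ht4 : t ≤ A1 / 4 := by
    have : K * (16 * t ^ 2) ≤ K * A1 ^ 2 := by linarith
    refine (pow_le_pow_iff_left₀ ht (by positivity) two_ne_zero).1 ?_
    linarith [le_of_mul_le_mul_left this hK]
  have htail := sq_sub_le_integral_sq_mul_measureReal_lt hX hb hmean ht (by linarith)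
  have hA1sq : (A1 / 4) ^ 2 ≤ (A1 / 2 - t) ^ 2 := pow_le_pow_left₀ (by positivity) (by linarith) 2
  rw [div_le_iff₀ (by positivity)]
  refine le_of_mul_le_mul_left ?_ h2
  calc (∫ ω, X ω ^ 2 ∂μ) * 1 ≤ 8 * K * A1 ^ 2 := by linarith
    _ = 128 * K * (A1 / 4) ^ 2 := by ring
    _ ≤ 128 * K * ((∫ ω, X ω ^ 2 ∂μ) * μ.real {ω | t < X ω}) := by
        gcongr; exact hA1sq.trans htail
    _ = (∫ ω, X ω ^ 2 ∂μ) * (μ.real {ω | t < X ω} * (128 * K)) := by ring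

end AntiConcentration

section Mixture

variable {ε a : ℝ} {f : ℝ → ℝ}

lemma isProbabilityMeasure_unif (ha : 0 < a) : IsProbabilityMeasure (unif a) := by
  constructor
  simp [unif, ENNReal.inv_mul_cancel, ha]

lemma isProbabilityMeasure_mix (hε0 : 0 ≤ ε) (hε1 : ε ≤ 1) (ha : 0 < a) :
    IsProbabilityMeasure (mix ε a) := by
  have := isProbabilityMeasure_unif ha
  have := isProbabilityMeasure_unif one_pos
  constructor
  simp [mix, ← ENNReal.ofReal_add (sub_nonneg.2 hε1) hε0]

lemma ae_mem_Icc_unif (ha : a ≤ 1) : ∀ᵐ y ∂unif a, y ∈ Set.Icc (0 : ℝ) 1 := by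
  refine Measure.ae_smul_measure ?_ _
  filter_upwards [ae_restrict_mem measurableSet_Icc] with y hy using ⟨hy.1, hy.2.trans ha⟩

lemma ae_mem_Icc_mix (ha : a ≤ 1) : ∀ᵐ y ∂mix ε a, y ∈ Set.Icc (0 : ℝ) 1 :=
  ae_add_measure_iff.2 ⟨Measure.ae_smul_measure (ae_mem_Icc_unif le_rfl) _,
    Measure.ae_smul_measure (ae_mem_Icc_unif ha) _⟩

lemma integral_unif (ha : 0 < a) : ∫ y, f y ∂unif a = a⁻¹ * ∫ y in 0..a, f y := by
  rw [unif, integral_smul_measure, ENNReal.toReal_inv, ENNReal.toReal_ofReal ha.le,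
    intervalIntegral.integral_of_le ha.le, integral_Icc_eq_integral_Ioc, smul_eq_mul]

lemma integrable_unif (hf : Continuous f) (ha : 0 < a) : Integrable f (unif a) :=
  hf.integrableOn_Icc.smul_measure (by simpa using ha)

lemma integrable_mix (hf : Continuous f) (ha : 0 < a) : Integrable f (mix ε a) :=
  ((integrable_unif hf one_pos).smul_measure ENNReal.ofReal_ne_top).add_measure
    ((integrable_unif hf ha).smul_measure ENNReal.ofReal_ne_top)

lemma integral_mix (hf : Continuous f) (hε0 : 0 ≤ ε) (hε1 : ε ≤ 1) (ha : 0 < a) :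
    ∫ y, f y ∂mix ε a = (1 - ε) * ∫ y, f y ∂unif 1 + ε * ∫ y, f y ∂unif a := by
  rw [mix, integral_add_measure ((integrable_unif hf one_pos).smul_measure ENNReal.ofReal_ne_top)
    ((integrable_unif hf ha).smul_measure ENNReal.ofReal_ne_top), integral_smul_measure,
    integral_smul_measure, ENNReal.toReal_ofReal (sub_nonneg.2 hε1), ENNReal.toReal_ofReal hε0,
    smul_eq_mul, smul_eq_mul]

noncomputable def mixMean (ε a : ℝ) : ℝ := ((1 - ε) + ε * a) / 2

lemma integral_id_mix (hε0 : 0 ≤ ε) (hε1 : ε ≤ 1) (ha : 0 < a) :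
    ∫ y, y ∂mix ε a = mixMean ε a := by
  rw [integral_mix (f := fun y ↦ y) continuous_id hε0 hε1 ha, integral_unif one_pos,
    integral_unif ha, mixMean]
  simp
  field_simp

lemma integral_sub_mixMean (hε0 : 0 ≤ ε) (hε1 : ε ≤ 1) (ha : 0 < a) :
    ∫ y, (y - mixMean ε a) ∂mix ε a = 0 := by
  have := isProbabilityMeasure_mix hε0 hε1 ha
  rw [integral_sub (integrable_mix (f := fun y ↦ y) continuous_id ha) (integrable_const _),
    integral_id_mix hε0 hε1 ha]
  simp

lemma ae_abs_sub_mixMean_le_one (hε0 : 0 ≤ ε) (hε1 : ε ≤ 1) (ha0 : 0 < a) (ha1 : a ≤ 1) :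
    ∀ᵐ y ∂mix ε a, |y - mixMean ε a| ≤ 1 := by
  filter_upwards [ae_mem_Icc_mix ha1] with y hy
  rw [mixMean, abs_le]
  constructor <;> nlinarith [hy.1, hy.2]

lemma integral_sub_sq_unif_one (c : ℝ) : ∫ y, (y - c) ^ 2 ∂unif 1 = 1 / 12 + (c - 1 / 2) ^ 2 := by
  rw [integral_unif one_pos, intervalIntegral.integral_comp_sub_right (fun y ↦ y ^ 2)]
  simp
  ring

lemma le_integral_sub_sq_mix (c : ℝ) (hε0 : 0 ≤ ε) (hε1 : ε ≤ 1) (ha : 0 < a) :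
    (1 - ε) / 12 ≤ ∫ y, (y - c) ^ 2 ∂mix ε a := by
  rw [integral_mix (by fun_prop) hε0 hε1 ha, integral_sub_sq_unif_one]
  have := mul_nonneg hε0 (integral_nonneg fun y ↦ sq_nonneg (y - c) : 0 ≤ ∫ y, (y - c) ^ 2 ∂unif a)
  nlinarith [sq_nonneg (c - 1 / 2), sub_nonneg.2 hε1]

end Mixture

section AlternativeLaw

variable {m : ℕ} {ε : ℝ} {a : Fin m → ℝ}

lemma isProbabilityMeasure_altLaw (hε0 : 0 ≤ ε) (hε1 : ε ≤ 1) (ha0 : ∀ t, 0 < a t) :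
    IsProbabilityMeasure (altLaw m ε a) := by
  have := fun t ↦ isProbabilityMeasure_mix hε0 hε1 (ha0 t)
  rw [altLaw]
  infer_instance

lemma integral_sum_altLaw (hε0 : 0 ≤ ε) (hε1 : ε ≤ 1) (ha0 : ∀ t, 0 < a t) :
    ∫ ζ, ∑ t, ζ t ∂altLaw m ε a = ∑ t, mixMean ε (a t) := by
  have := fun t ↦ isProbabilityMeasure_mix hε0 hε1 (ha0 t)
  rw [altLaw, integral_finsetSum]
  · exact sum_congr rfl fun t _ ↦ integral_eval.trans (integral_id_mix hε0 hε1 (ha0 t))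
  · exact fun t _ ↦ integrable_eval (integrable_mix continuous_id (ha0 t))

lemma one_div_le_measureReal_altLaw_lt_sum (hm : 0 < m) (hε0 : 0 ≤ ε) (hε : ε ≤ 1 / 2)
    (ha0 : ∀ t, 0 < a t) (ha1 : ∀ t, a t ≤ 1) {c' : ℝ} (hc : ∑ t, mixMean ε (a t) ≤ c')
    (hc' : 221184 * (c' - ∑ t, mixMean ε (a t)) ^ 2 ≤ m / 24) :
    1 / 221184 ≤ (altLaw m ε a).real {ζ | c' < ∑ t, ζ t} := by
  have hε1 : ε ≤ 1 := by linarith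
  have := fun t ↦ isProbabilityMeasure_mix hε0 hε1 (ha0 t)
  have := isProbabilityMeasure_altLaw hε0 hε1 ha0
  set Y : Fin m → (Fin m → ℝ) → ℝ := fun t ζ ↦ ζ t - mixMean ε (a t)
  have hind : iIndepFun Y (altLaw m ε a) :=
    iIndepFun_pi (X := fun t y ↦ y - mixMean ε (a t)) fun t ↦ (measurable_sub_const _).aemeasurable
  have hmeas (t : Fin m) : Measurable (Y t) := (measurable_pi_apply t).sub_const _
  have hbdd (t : Fin m) : ∀ᵐ ζ ∂altLaw m ε a, |Y t ζ| ≤ 1 :=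
    Measure.tendsto_eval_ae_ae.eventually (p := fun y ↦ |y - mixMean ε (a t)| ≤ 1)
      (ae_abs_sub_mixMean_le_one hε0 hε1 (ha0 t) (ha1 t))
  have hcen (t : Fin m) : ∫ ζ, Y t ζ ∂altLaw m ε a = 0 := by
    rw [altLaw, integral_comp_eval (μ := fun t ↦ mix ε (a t))
      (f := fun y ↦ y - mixMean ε (a t)) (by fun_prop), integral_sub_mixMean hε0 hε1 (ha0 t)]
  have hvar (t : Fin m) : 1 / 24 ≤ ∫ ζ, Y t ζ ^ 2 ∂altLaw m ε a := by
    rw [altLaw, integral_comp_eval (μ := fun t ↦ mix ε (a t))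
      (f := fun y ↦ (y - mixMean ε (a t)) ^ 2) (by fun_prop)]
    linarith [le_integral_sub_sq_mix (mixMean ε (a t)) hε0 hε1 (ha0 t)]
  have hA2 : m / 24 ≤ ∫ ζ, (∑ t, Y t ζ) ^ 2 ∂altLaw m ε a := by
    rw [integral_sum_sq hind hmeas hbdd hcen]
    calc (m : ℝ) / 24 = ∑ _t : Fin m, (1 / 24 : ℝ) := by simp; ring
      _ ≤ _ := sum_le_sum fun t _ ↦ hvar t
  have hA4 : ∫ ζ, (∑ t, Y t ζ) ^ 4 ∂altLaw m ε a ≤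
      1728 * (∫ ζ, (∑ t, Y t ζ) ^ 2 ∂altLaw m ε a) ^ 2 :=
    calc _ ≤ 3 * (#(univ : Finset (Fin m)) : ℝ) ^ 2 :=
          integral_sum_pow_four_le hind hmeas hbdd hcen _
      _ = 1728 * (m / 24) ^ 2 := by simp; ring
      _ ≤ _ := by gcongr
  have hset : {ζ | c' < ∑ t, ζ t} = {ζ | c' - ∑ t, mixMean ε (a t) < ∑ t, Y t ζ} := by
    ext ζ
    simp [Y, sum_sub_distrib]
  have hm' : (0 : ℝ) < m := by exact_mod_cast hm
  rw [hset, show (221184 : ℝ) = 128 * 1728 by norm_num]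
  exact one_div_le_measureReal_lt_of_integral_pow_four_le (by fun_prop)
    (ae_abs_sum_le_card hbdd univ) (integral_sum_eq_zero hmeas hbdd hcen univ) (by norm_num) hA4
    (by linarith) (sub_nonneg.2 hc) (by linarith)

lemma measureReal_altLaw_sum_le_le_one_sub {κ : ℝ} (hm : 0 < m) (hε0 : 0 ≤ ε) (hε : ε ≤ 1 / 2)
    (hκ : κ < 1) (ha0 : ∀ t, 1 - κ ≤ a t) (ha1 : ∀ t, a t ≤ 1)
    (hsmall : m * (ε * κ) ^ 2 ≤ 1 / 1327104) {c' : ℝ}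
    (hc : ∫ ζ, ∑ t, ζ t ∂altLaw m ε a ≤ c') (hc' : c' ≤ m / 2) :
    (altLaw m ε a).real {ζ | ∑ t, ζ t ≤ c'} ≤ 1 - 1 / 221184 := by
  have ha0' (t : Fin m) : 0 < a t := by linarith [ha0 t]
  rw [integral_sum_altLaw hε0 (by linarith) ha0'] at hc
  have hgap : c' - ∑ t, mixMean ε (a t) ≤ m * (ε * κ) / 2 := by
    calc c' - ∑ t, mixMean ε (a t) ≤ ∑ t, (1 / 2 - mixMean ε (a t)) := by
          rw [sum_sub_distrib]
          simpa [div_eq_mul_one_div (m : ℝ)] using hc'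
      _ = ∑ t : Fin m, ε * (1 - a t) / 2 := sum_congr rfl fun t _ ↦ by rw [mixMean]; ring
      _ ≤ ∑ t : Fin m, ε * κ / 2 := sum_le_sum fun t _ ↦ by nlinarith [ha0 t]
      _ = m * (ε * κ) / 2 := by simp; ring
  have hm' : (0 : ℝ) < m := by exact_mod_cast hm
  have hcompl : {ζ : Fin m → ℝ | ∑ t, ζ t ≤ c'} = {ζ | c' < ∑ t, ζ t}ᶜ := by
    ext ζ
    simp
  have := isProbabilityMeasure_altLaw hε0 (by linarith) ha0'
  rw [hcompl, probReal_compl_eq_one_sub (measurableSet_lt measurable_const (by fun_prop))]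
  suffices 1 / 221184 ≤ (altLaw m ε a).real {ζ | c' < ∑ t, ζ t} by linarith
  refine one_div_le_measureReal_altLaw_lt_sum hm hε0 hε ha0' ha1 hc ?_
  calc 221184 * (c' - ∑ t, mixMean ε (a t)) ^ 2
      ≤ 221184 * (m * (ε * κ) / 2) ^ 2 := by gcongr
    _ = 221184 / 4 * m * (m * (ε * κ) ^ 2) := by ring
    _ ≤ 221184 / 4 * m * (1 / 1327104) := by gcongr
    _ = m / 24 := by ring

end AlternativeLaw

lemma tendsto_mul_sq_rpow_neg_mul_rpow_neg {p q : ℝ} (hpq : p + q > 1 / 2) :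
    Tendsto (fun m : ℕ ↦ (m : ℝ) * ((m : ℝ) ^ (-p) * (m : ℝ) ^ (-q)) ^ 2) atTop (𝓝 0) := by
  refine ((tendsto_rpow_neg_atTop (by linarith : 0 < 2 * p + 2 * q - 1)).comp
    tendsto_natCast_atTop_atTop).congr' ?_
  filter_upwards [eventually_gt_atTop 0] with m hm
  have hm : (0 : ℝ) < m := by exact_mod_cast hm
  rw [Function.comp_apply, ← Real.rpow_natCast, Nat.cast_ofNat, Real.mul_rpow (by positivity)
    (by positivity), ← Real.rpow_mul hm.le, ← Real.rpow_mul hm.le]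
  nth_rewrite 2 [← Real.rpow_one (m : ℝ)]
  rw [← Real.rpow_add hm, ← Real.rpow_add hm]
  ring_nf

theorem sum_test_powerless_general (p q : ℝ) (hp0 : 0 < p)
    (hq0 : 0 < q) (hpq : p + q > 1 / 2)
    (a : (m : ℕ) → Fin m → ℝ)
    (ha0 : ∀ m : ℕ, 2 ≤ m → ∀ t, 1 - (m : ℝ) ^ (-q) ≤ a m t)
    (ha1 : ∀ m, 2 ≤ m → ∀ t, a m t ≤ 1)
    (c' : ℕ → ℝ)
    (hc : ∀ m : ℕ, 2 ≤ m →
      (∫ ζ, (∑ t, ζ t) ∂(altLaw m ((m : ℝ) ^ (-p)) (a m))) ≤ c' m ∧ c' m ≤ (m : ℝ) / 2) :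
    limsup
      (fun m : ℕ => (altLaw m ((m : ℝ) ^ (-p)) (a m) {ζ | ∑ t, ζ t ≤ c' m}).toReal)
      atTop < 1 := by
  have hε := ((tendsto_rpow_neg_atTop hp0).comp tendsto_natCast_atTop_atTop).eventually
    (ge_mem_nhds (by norm_num : (0 : ℝ) < 1 / 2))
  have hκ := ((tendsto_rpow_neg_atTop hq0).comp tendsto_natCast_atTop_atTop).eventually
    (gt_mem_nhds (by norm_num : (0 : ℝ) < 1))
  have hsmall := (tendsto_mul_sq_rpow_neg_mul_rpow_neg hpq).eventually
    (ge_mem_nhds (by norm_num : (0 : ℝ) < 1 / 1327104))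
  have hpower : ∀ᶠ m : ℕ in atTop,
      (altLaw m ((m : ℝ) ^ (-p)) (a m) {ζ | ∑ t, ζ t ≤ c' m}).toReal ≤ 1 - 1 / 221184 := by
    filter_upwards [eventually_ge_atTop 2, hε, hκ, hsmall] with m hm hεm hκm hsmallm
    exact measureReal_altLaw_sum_le_le_one_sub (by omega)
      (by positivity : (0 : ℝ) ≤ (m : ℝ) ^ (-p)) hεm hκm (ha0 m hm)
      (ha1 m hm) hsmallm (hc m hm).1 (hc m hm).2
  refine (limsup_le_of_le ?_ hpower).trans_lt (by norm_num)
  exact isCoboundedUnder_le_of_eventually_le atTop (.of_forall fun _ ↦ ENNReal.toReal_nonneg)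

/-- **Proposition 3.3, part 2 (the sum test is powerless past the boundary).**
Let `0 < p, q < 1` with `p + q > 1/2`, `ε_m = m^{-p}`, and `1 - m^{-q} ≤ a m t ≤ 1` for all
`m ≥ 2`, `1 ≤ t ≤ m`.  With `s_m(ζ) = ∑_t ζ_t`, `E0 s_m = m/2` and
`E1 s_m = ∫ s_m dP1_m`, for any sequence of critical values `c'_m` with
`E1 s_m ≤ c'_m ≤ E0 s_m`, the power of the sum test is bounded away from `1`:
`limsup_m P1_m(s_m ≤ c'_m) < 1`. -/
theorem sum_test_powerless (p q : ℝ) (hp0 : 0 < p) (hp1 : p < 1)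
    (hq0 : 0 < q) (hq1 : q < 1) (hpq : p + q > 1 / 2)
    (a : (m : ℕ) → Fin m → ℝ)
    (ha0 : ∀ m : ℕ, 2 ≤ m → ∀ t, 1 - (m : ℝ) ^ (-q) ≤ a m t)
    (ha1 : ∀ m, 2 ≤ m → ∀ t, a m t ≤ 1)
    (c' : ℕ → ℝ)
    (hc : ∀ m : ℕ, 2 ≤ m →
      (∫ ζ, (∑ t, ζ t) ∂(altLaw m ((m : ℝ) ^ (-p)) (a m))) ≤ c' m ∧ c' m ≤ (m : ℝ) / 2) :
    limsup
      (fun m : ℕ => (altLaw m ((m : ℝ) ^ (-p)) (a m) {ζ | ∑ t, ζ t ≤ c' m}).toReal)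
      atTop < 1 :=
  sum_test_powerless_general p q hp0 hq0 hpq a ha0 ha1 c' hc
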